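/- arXiv:1803.03928 — 8 statements merged into one kernel-verified Lean document; each statement's English description precedes it below -/
import Mathlib

section
/- Let (L, |·|) be a field with an absolute value, let J be an r×r Jordan block over L with nonzero eigenvalue λ (i.e., J has λ on the diagonal, 1 on the superdiagonal, and 0 elsewhere), and let v be a nonzero vector in L^r. If there exist positive constants c₅, c₆ and an infinite set S of positive integers such that for each n ∈ S every entry of J^n · v has absolute value at most c₅·n + c₆, then |λ| ≤ 1. -/
/-!
Let `k` be the last coordinate with `v k ≠ 0`. The Jordan block is upper triangular, so
`(J ^ n *ᵥ v) k = λ ^ n * v k`, and the hypothesis gives `|λ| ^ n * |v k| ≤ c₅ n + c₆` for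
infinitely many `n`. Since `|v k| > 0` and a linear function is `o(a ^ n)` for every `a > 1`,
this forces `|λ| ≤ 1`.
-/

open Filter Asymptotics

namespace Matrix

variable {ι R : Type*} [Fintype ι] [LinearOrder ι] [Semiring R]

theorem IsUpperTriangular.mulVec_apply_eq_zero {M : Matrix ι ι R} (hM : M.IsUpperTriangular)
    {w : ι → R} {k : ι} (hw : ∀ j, k < j → w j = 0) {i : ι} (hi : k < i) :
    (M *ᵥ w) i = 0 := by
  simp only [mulVec, dotProduct]
  refine Finset.sum_eq_zero fun j _ => ?_
  rcases le_or_gt j k with hjk | hkj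
  · rw [hM (hjk.trans_lt hi), zero_mul]
  · rw [hw j hkj, mul_zero]

theorem IsUpperTriangular.mulVec_apply_self {M : Matrix ι ι R} (hM : M.IsUpperTriangular)
    {w : ι → R} {k : ι} (hw : ∀ j, k < j → w j = 0) :
    (M *ᵥ w) k = M k k * w k := by
  simp only [mulVec, dotProduct]
  refine Finset.sum_eq_single k (fun j _ hjk => ?_) (by simp)
  rcases hjk.lt_or_gt with hjk | hkj
  · rw [hM hjk, zero_mul]
  · rw [hw j hkj, mul_zero]

theorem IsUpperTriangular.pow_mulVec_apply_self [DecidableEq ι] {M : Matrix ι ι R}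
    (hM : M.IsUpperTriangular) {w : ι → R} {k : ι} (hw : ∀ j, k < j → w j = 0) (n : ℕ) :
    (M ^ n *ᵥ w) k = M k k ^ n * w k := by
  induction n with
  | zero => simp
  | succ n ih =>
    have hpow : ∀ j, k < j → (M ^ n *ᵥ w) j = 0 := fun j hj =>
      IsUpperTriangular.mulVec_apply_eq_zero (hM.pow n) hw hj
    rw [pow_succ', ← mulVec_mulVec, hM.mulVec_apply_self hpow, ih, pow_succ', mul_assoc]

end Matrix

theorem Function.exists_ne_zero_and_forall_gt_eq_zero {ι R : Type*} [Fintype ι] [LinearOrder ι]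
    [Zero R] {v : ι → R} (hv : v ≠ 0) : ∃ k, v k ≠ 0 ∧ ∀ j, k < j → v j = 0 := by
  classical
  obtain ⟨i, hi⟩ := Function.ne_iff.mp hv
  obtain ⟨k, hk, hmax⟩ :=
    Finset.exists_max_image (Finset.univ.filter (v · ≠ 0)) id ⟨i, by simpa using hi⟩
  refine ⟨k, by simpa using hk, fun j hkj => ?_⟩
  by_contra hj
  exact (hmax j (by simpa using hj)).not_gt hkj

theorem le_one_of_frequently_mul_pow_le_linear {a b c d : ℝ} (hc : 0 < c)
    (h : ∃ᶠ n : ℕ in atTop, c * a ^ n ≤ b * n + d) : a ≤ 1 := by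
  by_contra! ha
  have hlin : (fun n : ℕ => b * n + d) =o[atTop] fun n => a ^ n := by
    refine ((isLittleO_pow_const_const_pow_of_one_lt 1 ha).const_mul_left b |>.congr_left
      fun n => by simp).add ?_
    exact isLittleO_const_left.mpr <| .inr <|
      tendsto_norm_atTop_atTop.comp (tendsto_pow_atTop_atTop_of_one_lt ha)
  obtain ⟨n, hle, hn⟩ := (h.and_eventually (hlin.def (half_pos hc))).exists
  have hpow : 0 < a ^ n := pow_pos (zero_lt_one.trans ha) n
  rw [Real.norm_of_nonneg hpow.le, Real.norm_eq_abs] at hn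
  linarith [le_abs_self (b * n + d), mul_pos hc hpow]

theorem stmt0_general {L : Type*} [Field L] (abv : AbsoluteValue L ℝ) {r : ℕ}
    (lam : L)
    (J : Matrix (Fin r) (Fin r) L)
    (hJ : ∀ i j : Fin r, J i j =
      if i = j then lam else if (j : ℕ) = (i : ℕ) + 1 then 1 else 0)
    (v : Fin r → L) (hv : v ≠ 0)
    (c₅ c₆ : ℝ)
    (S : Set ℕ) (hS : S.Infinite)
    (hbound : ∀ n ∈ S, ∀ i : Fin r, abv ((J ^ n).mulVec v i) ≤ c₅ * n + c₆) :
    abv lam ≤ 1 := by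
  have hJ_upper : J.IsUpperTriangular := fun i j (hji : j < i) => by
    rw [hJ, if_neg hji.ne', if_neg (by omega)]
  obtain ⟨k, hvk, hk⟩ := Function.exists_ne_zero_and_forall_gt_eq_zero hv
  refine le_one_of_frequently_mul_pow_le_linear (b := c₅) (d := c₆) (abv.pos hvk)
    ((Nat.frequently_atTop_iff_infinite.mpr hS).mono fun n hn => ?_)
  have := hbound n hn k
  rwa [hJ_upper.pow_mulVec_apply_self hk, hJ, if_pos rfl, map_mul, map_pow, mul_comm] at this

/-- If every entry of `J^n · v` (J a Jordan block with nonzero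
eigenvalue λ, v ≠ 0) is bounded by `c₅ n + c₆` for infinitely many positive `n`,
then `|λ| ≤ 1`. -/
theorem stmt0 {L : Type*} [Field L] (abv : AbsoluteValue L ℝ) {r : ℕ} (hr : 1 ≤ r)
    (lam : L) (hlam : lam ≠ 0)
    (J : Matrix (Fin r) (Fin r) L)
    (hJ : ∀ i j : Fin r, J i j =
      if i = j then lam else if (j : ℕ) = (i : ℕ) + 1 then 1 else 0)
    (v : Fin r → L) (hv : v ≠ 0)
    (c₅ c₆ : ℝ) (hc₅ : 0 < c₅) (hc₆ : 0 < c₆)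
    (S : Set ℕ) (hS : S.Infinite) (hSpos : ∀ n ∈ S, 0 < n)
    (hbound : ∀ n ∈ S, ∀ i : Fin r, abv ((J ^ n).mulVec v i) ≤ c₅ * n + c₆) :
    abv lam ≤ 1 :=
  stmt0_general abv lam J hJ v hv c₅ c₆ S hS hbound
end

section
/- Let A be an ℓ×ℓ matrix with integer entries and nonzero determinant, and let p be a nonzero column vector with integer entries. If there exist positive real numbers c₁, c₂ and an infinite set S of positive integers such that for each n ∈ S every entry of A^n · p has absolute value at most c₁·n + c₂, then A has an eigenvalue (over the complex numbers, or an algebraic closure of ℚ) which is a root of unity. -/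
/-
Let `g ∈ ℚ[X]` be the monic polynomial of least degree with `g(A) p = 0`. For a complex root `ρ`
of `g`, write `g = (X - ρ) h`; minimality gives `w := h(A) p ≠ 0`, and `A w = ρ w`. Since `h(A)`
commutes with `A`, `ρ ^ n w = h(A) (A ^ n p)` grows at most linearly along `S`, forcing `|ρ| ≤ 1`.
A root `μ` of `g` is thus a nonzero (as `det A ≠ 0`) algebraic integer whose conjugates, being
roots of `g` too, all lie in the closed unit disc; by Kronecker's theorem it is a root of unity.
-/

open Polynomial Filter Topology Matrix IntermediateField

theorem le_one_of_frequently_pow_le_mul_add {r a b : ℝ}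
    (h : ∃ᶠ k : ℕ in atTop, r ^ k ≤ a * k + b) : r ≤ 1 := by
  by_contra! hr
  have hlim : Tendsto (fun k : ℕ => (a * k + b) / r ^ k) atTop (𝓝 0) := by
    have h1 := (tendsto_pow_const_div_const_pow_of_one_lt 1 hr).const_mul a
    have h0 := (tendsto_pow_const_div_const_pow_of_one_lt 0 hr).const_mul b
    convert h1.add h0 using 2 <;> ring
  obtain ⟨k, hk, hk'⟩ := (h.and_eventually (hlim.eventually (gt_mem_nhds one_pos))).exists
  rw [div_lt_one (by positivity)] at hk'
  exact hk.not_gt hk'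

theorem Complex.exists_pow_eq_one_of_norm_conj_le_one {μ : ℂ} (hμ : μ ≠ 0)
    (hint : IsIntegral ℤ μ) (hconj : ∀ ρ : ℂ, aeval ρ (minpoly ℚ μ) = 0 → ‖ρ‖ ≤ 1) :
    ∃ m, 0 < m ∧ μ ^ m = 1 := by
  set x := AdjoinSimple.gen ℚ μ
  have hx : algebraMap ℚ⟮μ⟯ ℂ x = μ := AdjoinSimple.algebraMap_gen ℚ μ
  have : FiniteDimensional ℚ ℚ⟮μ⟯ := adjoin.finiteDimensional hint.tower_top
  have : NumberField ℚ⟮μ⟯ := ⟨⟩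
  have hx0 : x ≠ 0 := by
    rintro h0
    rw [h0, map_zero] at hx
    exact hμ hx.symm
  have hxint : IsIntegral ℤ x := by
    rwa [← isIntegral_algebraMap_iff (algebraMap ℚ⟮μ⟯ ℂ).injective, hx]
  obtain ⟨m, hm, hxm⟩ := NumberField.Embeddings.pow_eq_one_of_norm_le_one ℚ⟮μ⟯ ℂ hx0 hxint
    fun φ => hconj _ (by
      rw [← show minpoly ℚ x = minpoly ℚ μ from minpoly_gen ℚ μ]
      exact (aeval_algHom_apply φ.toRatAlgHom x _).trans (by rw [minpoly.aeval, map_zero]))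
  exact ⟨m, hm, by rw [← hx, ← map_pow, hxm, map_one]⟩

namespace Matrix

variable {n : Type*} [Fintype n] [DecidableEq n]

section CommRing

variable {R : Type*} [CommRing R]

theorem aeval_mulVec_eq_sum_fin (M : Matrix n n R) (v : n → R) {h : R[X]} {d : ℕ}
    (hd : h.natDegree < d) :
    aeval M h *ᵥ v = ∑ j : Fin d, h.coeff j • (M ^ (j : ℕ) *ᵥ v) := by
  rw [aeval_eq_sum_range' hd, sum_mulVec, ← Fin.sum_univ_eq_sum_range]
  simp only [smul_mulVec]

theorem linearIndependent_pow_mulVec_iff (M : Matrix n n R) (v : n → R) (d : ℕ) :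
    LinearIndependent R (fun j : Fin d => M ^ (j : ℕ) *ᵥ v) ↔
      ∀ h : R[X], h ≠ 0 → h.natDegree < d → aeval M h *ᵥ v ≠ 0 := by
  rw [Fintype.linearIndependent_iff]
  constructor
  · intro hli h hh0 hhd hhv
    rw [aeval_mulVec_eq_sum_fin M v hhd] at hhv
    refine hh0 (Polynomial.ext fun i => ?_)
    rcases lt_or_ge i d with hid | hid
    · exact hli (fun j => h.coeff j) hhv ⟨i, hid⟩
    · exact coeff_eq_zero_of_natDegree_lt (hhd.trans_le hid)
  · intro hmin c hc
    set h : R[X] := ((degreeLTEquiv R d).symm c : R[X])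
    have hcoeff : ∀ j : Fin d, h.coeff j = c j := fun j =>
      congrFun ((degreeLTEquiv R d).apply_symm_apply c) j
    by_contra! hc0
    have hh0 : h ≠ 0 := by
      obtain ⟨j, hj⟩ := hc0
      exact fun h0 => hj (by rw [← hcoeff, h0, coeff_zero])
    have hhd : h.natDegree < d :=
      (natDegree_lt_iff_degree_lt hh0).2 (mem_degreeLT.1 ((degreeLTEquiv R d).symm c).2)
    refine hmin h hh0 hhd ?_
    simpa only [aeval_mulVec_eq_sum_fin M v hhd, hcoeff] using hc

theorem isRoot_charpoly_of_mulVec_eq_smul [IsDomain R] {M : Matrix n n R} {w : n → R} {μ : R}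
    (hw : w ≠ 0) (h : M *ᵥ w = μ • w) : M.charpoly.IsRoot μ := by
  rw [IsRoot, eval_charpoly, ← exists_mulVec_eq_zero_iff]
  exact ⟨w, hw, by simp [sub_mulVec, h]⟩

theorem ne_zero_of_mulVec_eq_smul [IsDomain R] {M : Matrix n n R} {w : n → R} {μ : R}
    (hM : M.det ≠ 0) (hw : w ≠ 0) (h : M *ᵥ w = μ • w) : μ ≠ 0 := by
  rintro rfl
  rw [zero_smul] at h
  exact hM (exists_mulVec_eq_zero_iff.1 ⟨w, hw, h⟩)

end CommRing

section Field

variable {K : Type*} [Field K]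

/-- `g` is the local minimal polynomial of `v` under `M`, i.e. the monic generator of the
annihilator of `v` in `K[X]`. Minimality is recorded as independence of the Krylov vectors,
the form in which it survives extension of scalars. -/
structure IsLocalMinpoly (M : Matrix n n K) (v : n → K) (g : K[X]) : Prop where
  monic : g.Monic
  aeval_mulVec : aeval M g *ᵥ v = 0
  linearIndependent : LinearIndependent K fun j : Fin g.natDegree => M ^ (j : ℕ) *ᵥ v

theorem exists_isLocalMinpoly (M : Matrix n n K) (v : n → K) : ∃ g, IsLocalMinpoly M v g := by
  classical
  have hex : ∃ d, ∃ g : K[X], g.Monic ∧ g.natDegree = d ∧ aeval M g *ᵥ v = 0 :=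
    ⟨_, M.charpoly, M.charpoly_monic, rfl, by rw [aeval_self_charpoly, zero_mulVec]⟩
  obtain ⟨g, hg, hgd, hgv⟩ := Nat.find_spec hex
  refine ⟨g, hg, hgv, (linearIndependent_pow_mulVec_iff M v _).2 fun h hh0 hhd hhv => ?_⟩
  rw [hgd] at hhd
  refine Nat.find_min hex hhd ⟨h * C h.leadingCoeff⁻¹, monic_mul_leadingCoeff_inv hh0,
    natDegree_mul_C (inv_ne_zero (leadingCoeff_ne_zero.2 hh0)), ?_⟩
  rw [mul_comm, map_mul, ← mulVec_mulVec, hhv, mulVec_zero]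

namespace IsLocalMinpoly

variable {M : Matrix n n K} {v : n → K} {g : K[X]}

theorem natDegree_pos (hg : IsLocalMinpoly M v g) (hv : v ≠ 0) : 0 < g.natDegree := by
  by_contra! h0
  have hg1 : g = 1 := hg.monic.natDegree_eq_zero.1 (Nat.le_zero.1 h0)
  exact hv (by simpa [hg1] using hg.aeval_mulVec)

theorem map {L : Type*} [Field L] [Algebra K L] (hg : IsLocalMinpoly M v g) :
    IsLocalMinpoly (M.map (algebraMap K L)) (algebraMap K L ∘ v) (g.map (algebraMap K L)) := by
  have hmap : ∀ N : Matrix n n K, N.map (algebraMap K L) *ᵥ (algebraMap K L ∘ v) =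
      algebraMap K L ∘ (N *ᵥ v) := fun N => funext fun i => (RingHom.map_mulVec _ N v i).symm
  refine ⟨hg.monic.map _, ?_, ?_⟩
  · have : aeval (M.map (algebraMap K L)) (g.map (algebraMap K L)) =
        (aeval M g).map (algebraMap K L) := by
      rw [aeval_map_algebraMap]
      exact aeval_algHom_apply (AlgHom.mapMatrix (Algebra.ofId K L)) M g
    rw [this, hmap, hg.aeval_mulVec]
    ext; simp
  · rw [natDegree_map]
    simpa only [← Matrix.map_pow, hmap, linearIndependent_algebraMap_comp_iff]
      using hg.linearIndependent

theorem exists_eigenvector_of_isRoot (hg : IsLocalMinpoly M v g) {μ : K} (hμ : g.IsRoot μ) :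
    ∃ H : Matrix n n K, Commute M H ∧ H *ᵥ v ≠ 0 ∧ M *ᵥ (H *ᵥ v) = μ • (H *ᵥ v) := by
  set h := g /ₘ (X - C μ)
  have hfac : (X - C μ) * h = g := mul_divByMonic_eq_iff_isRoot.2 hμ
  have hh0 : h ≠ 0 := by
    rintro h0
    rw [h0, mul_zero] at hfac
    exact hg.monic.ne_zero hfac.symm
  have hhd : h.natDegree < g.natDegree := by
    rw [← hfac, natDegree_mul (X_sub_C_ne_zero μ) hh0, natDegree_X_sub_C]
    omega
  refine ⟨aeval M h, by simpa only [aeval_X] using (commute_X h).map (aeval M), ?_, ?_⟩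
  · exact (linearIndependent_pow_mulVec_iff M v _).1 hg.linearIndependent h hh0 hhd
  · have := congrArg (· *ᵥ v) (congrArg (aeval M) hfac)
    simp only [map_mul, map_sub, aeval_X, aeval_C, ← mulVec_mulVec, sub_mulVec,
      hg.aeval_mulVec, Algebra.algebraMap_eq_smul_one, smul_mulVec, one_mulVec] at this
    exact sub_eq_zero.1 this

end IsLocalMinpoly

end Field

theorem norm_le_one_of_commute_of_mulVec_eq_smul {𝕜 : Type*} [NormedField 𝕜]
    {M H : Matrix n n 𝕜} {v : n → 𝕜} {μ : 𝕜} (hMH : Commute M H) (hw : H *ᵥ v ≠ 0)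
    (hμ : M *ᵥ (H *ᵥ v) = μ • (H *ᵥ v)) {a b : ℝ}
    (hbound : ∃ᶠ k : ℕ in atTop, ∀ i, ‖(M ^ k *ᵥ v) i‖ ≤ a * k + b) : ‖μ‖ ≤ 1 := by
  obtain ⟨i, hi⟩ := Function.ne_iff.1 hw
  set w := H *ᵥ v
  have hwi : 0 < ‖w i‖ := norm_pos_iff.2 hi
  set C := ∑ j, ‖H i j‖
  have hpow : ∀ k : ℕ, M ^ k *ᵥ w = μ ^ k • w := by
    intro k
    induction k with
    | zero => simp
    | succ k ih =>
      rw [pow_succ', ← mulVec_mulVec, ih, mulVec_smul, hμ, smul_smul, ← pow_succ]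
  refine le_one_of_frequently_pow_le_mul_add (a := C * a / ‖w i‖) (b := C * b / ‖w i‖) ?_
  refine hbound.mono fun k hk => ?_
  have hcomm : M ^ k *ᵥ w = H *ᵥ (M ^ k *ᵥ v) := by
    rw [mulVec_mulVec, mulVec_mulVec, (hMH.pow_left k).eq]
  have : ‖μ‖ ^ k * ‖w i‖ ≤ C * (a * k + b) := calc
    ‖μ‖ ^ k * ‖w i‖ = ‖(H *ᵥ (M ^ k *ᵥ v)) i‖ := by
      rw [← hcomm, hpow, Pi.smul_apply, smul_eq_mul, norm_mul, norm_pow]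
    _ ≤ ∑ j, ‖H i j‖ * ‖(M ^ k *ᵥ v) j‖ := (norm_sum_le _ _).trans_eq (by simp only [norm_mul])
    _ ≤ C * (a * k + b) := by
      rw [Finset.sum_mul]
      exact Finset.sum_le_sum fun j _ => mul_le_mul_of_nonneg_left (hk j) (norm_nonneg _)
  rw [← le_div_iff₀ hwi] at this
  exact this.trans_eq (by ring)

theorem map_intCast_pow_mulVec {R : Type*} [Ring R] (A : Matrix n n ℤ) (p : n → ℤ) (k : ℕ) :
    A.map (Int.cast : ℤ → R) ^ k *ᵥ (Int.cast ∘ p) = Int.cast ∘ (A ^ k *ᵥ p) := by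
  funext i
  rw [Function.comp_apply, ← eq_intCast (Int.castRingHom R), RingHom.map_mulVec, Matrix.map_pow]
  rfl

theorem isIntegral_of_isRoot_charpoly_map_intCast {A : Matrix n n ℤ} {μ : ℂ}
    (h : (A.map (Int.cast : ℤ → ℂ)).charpoly.IsRoot μ) : IsIntegral ℤ μ :=
  ⟨A.charpoly, A.charpoly_monic, by rwa [eval₂_eq_eval_map, ← charpoly_map]⟩

end Matrix

theorem stmt1_general {ℓ : ℕ} (A : Matrix (Fin ℓ) (Fin ℓ) ℤ) (hA : A.det ≠ 0)
    (p : Fin ℓ → ℤ) (hp : p ≠ 0)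
    (c₁ c₂ : ℝ)
    (S : Set ℕ) (hS : S.Infinite)
    (hbound : ∀ n ∈ S, ∀ i : Fin ℓ, |(((A ^ n).mulVec p i : ℤ) : ℝ)| ≤ c₁ * n + c₂) :
    ∃ ζ : ℂ, (A.map (Int.cast : ℤ → ℂ)).charpoly.IsRoot ζ ∧ ∃ m : ℕ, 0 < m ∧ ζ ^ m = 1 := by
  set B := A.map (Int.cast : ℤ → ℂ)
  obtain ⟨g, hg⟩ := exists_isLocalMinpoly (A.map (Int.cast : ℤ → ℚ)) (Int.cast ∘ p)
  have hgC : IsLocalMinpoly B (Int.cast ∘ p) (g.map (algebraMap ℚ ℂ)) := by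
    convert hg.map (L := ℂ) <;> ext <;> simp [B]
  have hgrowth : ∃ᶠ k : ℕ in atTop, ∀ i, ‖(B ^ k *ᵥ (Int.cast ∘ p)) i‖ ≤ c₁ * k + c₂ := by
    refine (Nat.frequently_atTop_iff_infinite.2 hS).mono fun k hk i => ?_
    rw [map_intCast_pow_mulVec, Function.comp_apply, Complex.norm_intCast]
    exact hbound k hk i
  have hroots : ∀ ρ : ℂ, aeval ρ g = 0 → ‖ρ‖ ≤ 1 := fun ρ hρ => by
    obtain ⟨H, hBH, hw, hρ⟩ :=
      hgC.exists_eigenvector_of_isRoot (by rwa [IsRoot, eval_map_algebraMap])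
    exact norm_le_one_of_commute_of_mulVec_eq_smul hBH hw hρ hgrowth
  have hp' : (Int.cast ∘ p : Fin ℓ → ℚ) ≠ 0 := fun h0 =>
    hp (funext fun i => by simpa using congrFun h0 i)
  obtain ⟨μ, hμ⟩ := IsAlgClosed.exists_aeval_eq_zero ℂ g
    (natDegree_pos_iff_degree_pos.1 (hg.natDegree_pos hp')).ne'
  obtain ⟨H, -, hw, hμB⟩ :=
    hgC.exists_eigenvector_of_isRoot (by rwa [IsRoot, eval_map_algebraMap])
  have hBdet : B.det ≠ 0 := by
    rw [show B.det = A.det from ((Int.castRingHom ℂ).map_det A).symm]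
    exact_mod_cast hA
  have hchar : B.charpoly.IsRoot μ := isRoot_charpoly_of_mulVec_eq_smul hw hμB
  refine ⟨μ, hchar, Complex.exists_pow_eq_one_of_norm_conj_le_one
    (ne_zero_of_mulVec_eq_smul hBdet hw hμB) (isIntegral_of_isRoot_charpoly_map_intCast hchar)
    fun ρ hρ => hroots ρ (aeval_eq_zero_of_dvd_aeval_eq_zero (minpoly.dvd ℚ μ hμ) hρ)⟩

/-- If `A` is an integer matrix with nonzero determinant, `p ≠ 0` an
integer vector, and every entry of `A^n · p` is bounded in absolute value by
`c₁ n + c₂` for all `n` in an infinite set of positive integers, then `A` has an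
eigenvalue (in `ℂ`) which is a root of unity. -/
theorem stmt1 {ℓ : ℕ} (A : Matrix (Fin ℓ) (Fin ℓ) ℤ) (hA : A.det ≠ 0)
    (p : Fin ℓ → ℤ) (hp : p ≠ 0)
    (c₁ c₂ : ℝ) (hc₁ : 0 < c₁) (hc₂ : 0 < c₂)
    (S : Set ℕ) (hS : S.Infinite) (hSpos : ∀ n ∈ S, 0 < n)
    (hbound : ∀ n ∈ S, ∀ i : Fin ℓ, |(((A ^ n).mulVec p i : ℤ) : ℝ)| ≤ c₁ * n + c₂) :
    ∃ ζ : ℂ, (A.map (Int.cast : ℤ → ℂ)).charpoly.IsRoot ζ ∧ ∃ m : ℕ, 0 < m ∧ ζ ^ m = 1 :=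
  stmt1_general A hA p hp c₁ c₂ S hS hbound
end

section
/- Let λ₁, …, λ_k be multiplicatively independent nonzero elements of an algebraically closed field 𝕜 of characteristic 0. If F ∈ 𝕜[x₁, …, x_k] is a polynomial such that F(λ₁^n, …, λ_k^n) = 0 for all n ∈ ℕ, then F = 0. -/
/-!
Evaluating along the orbit `n ↦ (λ₁ⁿ, …, λ_kⁿ)` sends the monomial `x^d` to the geometric
sequence `n ↦ μ_dⁿ` with ratio `μ_d = ∏ λᵢ^{dᵢ}`. Multiplicative independence makes `d ↦ μ_d`
injective, and geometric sequences with distinct ratios are linearly independent (Dedekind's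
independence of characters of the monoid `ℕ`), so all coefficients of `F` vanish.
-/

open Finset

theorem linearIndependent_geometric (R : Type*) [CommRing R] [IsDomain R] :
    LinearIndependent R (fun (a : R) (n : ℕ) => a ^ n) := by
  have hchar := (linearIndependent_monoidHom (Multiplicative ℕ) R).comp (powersHom R)
    (powersHom R).injective
  have hfun : Function.Injective (LinearMap.funLeft R R (Multiplicative.ofAdd (α := ℕ))) :=
    LinearMap.funLeft_injective_of_surjective _ _ _ Multiplicative.ofAdd.surjective
  exact hchar.map' _ (LinearMap.ker_eq_bot.mpr hfun)

theorem prod_pow_injective_of_forall_prod_zpow_eq_one {ι G₀ : Type*} [Fintype ι]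
    [CommGroupWithZero G₀] {lam : ι → G₀} (h0 : ∀ i, lam i ≠ 0)
    (hindep : ∀ c : ι → ℤ, ∏ i, lam i ^ c i = 1 → c = 0) :
    Function.Injective fun d : ι →₀ ℕ => ∏ i, lam i ^ d i := by
  intro d d' hdd'
  have hdiff : ∏ i, lam i ^ ((d i : ℤ) - d' i) = 1 := by
    simp only [zpow_sub₀ (h0 _), zpow_natCast, prod_div_distrib]
    exact div_eq_one_iff_eq (prod_ne_zero_iff.mpr fun i _ => pow_ne_zero _ (h0 i)) |>.mpr hdd'
  ext i
  simpa [sub_eq_zero] using congrFun (hindep _ hdiff) i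

theorem MvPolynomial.eval_pow_eq_sum {σ R : Type*} [Fintype σ] [CommSemiring R] (lam : σ → R)
    (F : MvPolynomial σ R) (n : ℕ) :
    eval (fun i => lam i ^ n) F = ∑ d ∈ F.support, F.coeff d * (∏ i, lam i ^ d i) ^ n := by
  rw [eval_eq']
  refine sum_congr rfl fun d _ => ?_
  rw [← prod_pow]
  simp only [← pow_mul, mul_comm]

theorem stmt3_general {𝕜 : Type*} [Field 𝕜] {k : ℕ}
    (lam : Fin k → 𝕜) (h0 : ∀ i, lam i ≠ 0)
    (hindep : ∀ c : Fin k → ℤ, ∏ i, lam i ^ c i = 1 → c = 0)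
    (F : MvPolynomial (Fin k) 𝕜)
    (hF : ∀ n : ℕ, MvPolynomial.eval (fun i => lam i ^ n) F = 0) :
    F = 0 := by
  have hli := (linearIndependent_geometric 𝕜).comp _
    (prod_pow_injective_of_forall_prod_zpow_eq_one h0 hindep)
  have hsum : ∑ d ∈ F.support, F.coeff d • (fun n : ℕ => (∏ i, lam i ^ d i) ^ n) = 0 := by
    funext n
    simpa [MvPolynomial.eval_pow_eq_sum] using hF n
  by_contra hF0
  obtain ⟨d, hd⟩ := MvPolynomial.ne_zero_iff.mp hF0
  exact hd (linearIndependent_iff'.mp hli _ _ hsum d (MvPolynomial.mem_support_iff.mpr hd))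

/-- if `λ₁, …, λ_k` are multiplicatively independent nonzero elements
of an algebraically closed field of characteristic 0 and a polynomial `F` vanishes
at `(λ₁^n, …, λ_k^n)` for all `n`, then `F = 0`. -/
theorem stmt3 {𝕜 : Type*} [Field 𝕜] [IsAlgClosed 𝕜] [CharZero 𝕜] {k : ℕ}
    (lam : Fin k → 𝕜) (h0 : ∀ i, lam i ≠ 0)
    (hindep : ∀ c : Fin k → ℤ, ∏ i, lam i ^ c i = 1 → c = 0)
    (F : MvPolynomial (Fin k) 𝕜)
    (hF : ∀ n : ℕ, MvPolynomial.eval (fun i => lam i ^ n) F = 0) :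
    F = 0 :=
  stmt3_general lam h0 hindep F hF
end

section
/- Let λ₁, …, λ_{k-1} be multiplicatively independent nonzero elements of an algebraically closed field 𝕜 of characteristic 0. If F ∈ 𝕜[x₁, …, x_k] is a polynomial such that F(n·λ₁^n, λ₁^n, λ₂^n, …, λ_{k-1}^n) = 0 for all n ∈ ℕ, then F = 0. -/
/-!
At the point `(n λ₁ⁿ, λ₁ⁿ, …, λ_{k-1}ⁿ)` the monomial `x₁^{a₁} ⋯ x_k^{a_k}` takes the value
`n^{a₁} μₐⁿ` with `μₐ = λ₁^{a₁+a₂} λ₂^{a₃} ⋯ λ_{k-1}^{a_k}`, and multiplicative independence makes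
`a ↦ (μₐ, a₁)` injective. So it suffices that the exponential monomials `n ↦ n^j μⁿ` (`μ ≠ 0`)
are linearly independent. For a fixed `μ` this says that a polynomial vanishing on `ℕ` is zero.
For distinct `μ`, note that `(S - μ)(n^j μⁿ)` is a combination of the `n^i μⁿ` with `i < j`, where
`S` is the shift of sequences, so `n^j μⁿ` lies in the generalized `μ`-eigenspace of `S`; and
generalized eigenspaces for distinct eigenvalues are independent.
-/

open Polynomial

section ExpMonomial

variable {R : Type*} [CommRing R]

def expMonomial (μ : R) (j : ℕ) : ℕ → R := fun n => (n : R) ^ j * μ ^ n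

variable (R) in
abbrev seqShift : Module.End R (ℕ → R) := LinearMap.funLeft R R Nat.succ

theorem seqShift_sub_smul_expMonomial (μ : R) (j : ℕ) :
    (seqShift R - μ • 1) (expMonomial μ j) =
      ∑ i ∈ Finset.range j, (μ * j.choose i) • expMonomial μ i := by
  ext n
  have hbin : ((n : R) + 1) ^ j = ∑ i ∈ Finset.range j, (n : R) ^ i * j.choose i + (n : R) ^ j := by
    simp [add_pow, Finset.sum_range_succ]
  simp only [LinearMap.sub_apply, LinearMap.funLeft_apply, LinearMap.smul_apply,
    Module.End.one_apply, Pi.sub_apply, Pi.smul_apply, Finset.sum_apply, expMonomial, smul_eq_mul,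
    Nat.succ_eq_add_one, Nat.cast_add, Nat.cast_one, hbin, add_mul, Finset.sum_mul]
  rw [add_sub_assoc, pow_succ,
    show (n : R) ^ j * (μ ^ n * μ) - μ * ((n : R) ^ j * μ ^ n) = 0 by ring, add_zero]
  exact Finset.sum_congr rfl fun i _ => by ring

theorem Module.End.mem_maxGenEigenspace_of_sub_smul_mem {M : Type*} [AddCommGroup M] [Module R M]
    {f : Module.End R M} {μ : R} {x : M} (hx : (f - μ • 1) x ∈ f.maxGenEigenspace μ) :
    x ∈ f.maxGenEigenspace μ := by
  obtain ⟨k, hk⟩ := (Module.End.mem_maxGenEigenspace _ _ _).1 hx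
  exact (Module.End.mem_maxGenEigenspace _ _ _).2 ⟨k + 1, by rwa [pow_succ, Module.End.mul_apply]⟩

theorem expMonomial_mem_maxGenEigenspace (μ : R) (j : ℕ) :
    expMonomial μ j ∈ (seqShift R).maxGenEigenspace μ := by
  induction j using Nat.strong_induction_on with
  | _ j ih =>
  refine Module.End.mem_maxGenEigenspace_of_sub_smul_mem ?_
  rw [seqShift_sub_smul_expMonomial]
  exact Submodule.sum_mem _ fun i hi => Submodule.smul_mem _ _ (ih i (Finset.mem_range.1 hi))

variable [IsDomain R] [CharZero R]

theorem Polynomial.eq_zero_of_forall_eval_natCast_eq_zero {p : R[X]}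
    (hp : ∀ n : ℕ, p.eval (n : R) = 0) : p = 0 :=
  p.eq_zero_of_infinite_isRoot <| (Set.infinite_range_of_injective Nat.cast_injective).mono <|
    Set.range_subset_iff.2 hp

theorem linearIndependent_expMonomial {μ : R} (hμ : μ ≠ 0) :
    LinearIndependent R (expMonomial μ) := by
  let Φ : R[X] →ₗ[R] ℕ → R := LinearMap.pi fun n => μ ^ n • Polynomial.leval (n : R)
  have hΦ : LinearMap.ker Φ = ⊥ :=
    LinearMap.ker_eq_bot'.2 fun p hp => eq_zero_of_forall_eval_natCast_eq_zero fun n => by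
      simpa [Φ, hμ] using congrFun hp n
  have hbasis : Φ ∘ basisMonomials R = expMonomial μ := by
    ext j n
    simp [Φ, expMonomial, mul_comm]
  simpa only [hbasis] using (basisMonomials R).linearIndependent.map' Φ hΦ

theorem linearIndependent_expMonomial_units :
    LinearIndependent R fun p : Rˣ × ℕ => expMonomial (p.1 : R) p.2 := by
  have hgen : iSupIndep fun u : Rˣ => (seqShift R).maxGenEigenspace (u : R) :=
    (seqShift R).independent_maxGenEigenspace.comp Units.val_injective
  have hspan : iSupIndep fun u : Rˣ => Submodule.span R (Set.range (expMonomial (u : R))) :=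
    hgen.mono fun u => Submodule.span_le.2 <| Set.range_subset_iff.2 fun j =>
      expMonomial_mem_maxGenEigenspace (u : R) j
  have hsigma : LinearIndependent R fun p : Σ _ : Rˣ, ℕ => expMonomial (p.1 : R) p.2 :=
    linearIndependent_iUnion_finite (f := fun u : Rˣ => expMonomial (u : R))
      (fun u => linearIndependent_expMonomial u.ne_zero) fun _ _ _ hu => hspan.disjoint_biSup hu
  exact hsigma.comp (Equiv.sigmaEquivProd _ _).symm (Equiv.injective _)

end ExpMonomial

theorem prod_pow_injective {ι G : Type*} [Fintype ι] [CommGroup G] {u : ι → G}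
    (hu : ∀ c : ι → ℤ, ∏ i, u i ^ c i = 1 → c = 0) :
    Function.Injective fun e : ι → ℕ => ∏ i, u i ^ e i := by
  intro e e' h
  have hc := hu (fun i => (e i : ℤ) - e' i) <| by
    simp only [zpow_sub, zpow_natCast, Finset.prod_mul_distrib, Finset.prod_inv_distrib,
      h, mul_inv_cancel]
  funext i
  simpa [sub_eq_zero] using congrFun hc i

theorem prod_cons_mul_pow_pow {M : Type*} [CommMonoid M] {k : ℕ} (a : M) (lam : Fin (k + 1) → M)
    (n : ℕ) (m : Fin (k + 2) → ℕ) :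
    ∏ j, (Fin.cons (a * lam 0 ^ n) (fun i => lam i ^ n) : Fin (k + 2) → M) j ^ m j =
      a ^ m 0 * (lam 0 ^ m 0 * ∏ i, lam i ^ m i.succ) ^ n := by
  rw [Fin.prod_univ_succ]
  simp only [Fin.cons_zero, Fin.cons_succ, mul_pow, ← pow_mul, ← Finset.prod_pow]
  simp only [mul_comm n, mul_assoc]

/-- The informal `k` is `k + 2` here: `lam 0, …, lam k` are `λ₁, …, λ_{k+1}`. -/
theorem stmt4_general {𝕜 : Type*} [Field 𝕜] [CharZero 𝕜] {k : ℕ}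
    (lam : Fin (k + 1) → 𝕜) (h0 : ∀ i, lam i ≠ 0)
    (hindep : ∀ c : Fin (k + 1) → ℤ, ∏ i, lam i ^ c i = 1 → c = 0)
    (F : MvPolynomial (Fin (k + 2)) 𝕜)
    (hF : ∀ n : ℕ,
      MvPolynomial.eval (Fin.cons ((n : 𝕜) * lam 0 ^ n) (fun i => lam i ^ n)) F = 0) :
    F = 0 := by
  set u : Fin (k + 1) → 𝕜ˣ := fun i => Units.mk0 (lam i) (h0 i)
  have hu : ∀ c : Fin (k + 1) → ℤ, ∏ i, u i ^ c i = 1 → c = 0 := fun c hc =>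
    hindep c (by simpa [u] using congrArg Units.val hc)
  let φ : (Fin (k + 2) →₀ ℕ) → 𝕜ˣ × ℕ := fun m => (u 0 ^ m 0 * ∏ i, u i ^ m i.succ, m 0)
  have hφ : φ.Injective := by
    intro m m' h
    obtain ⟨hμ, hm0⟩ := Prod.mk.inj h
    rw [hm0, mul_right_inj] at hμ
    have htail := prod_pow_injective hu hμ
    ext j
    cases j using Fin.cases with
    | zero => exact hm0
    | succ i => exact congrFun htail i
  have hsum : ∑ m ∈ F.support, F.coeff m • expMonomial ((φ m).1 : 𝕜) (φ m).2 = 0 := by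
    ext n
    simpa [MvPolynomial.eval_eq', prod_cons_mul_pow_pow, expMonomial, φ, u] using hF n
  have hcoeff := linearIndependent_iff'.1 (linearIndependent_expMonomial_units.comp φ hφ) _ _ hsum
  ext m
  by_contra hm
  exact hm (hcoeff m (MvPolynomial.mem_support_iff.2 hm))

/-- if `λ₁, …, λ_{k-1}` (here `lam : Fin (k+1) → 𝕜`, so there are
`k+1` of them and `F` has `k+2` variables) are multiplicatively independent
nonzero elements and a polynomial `F` vanishes at
`(n·λ₁^n, λ₁^n, λ₂^n, …, λ_{k-1}^n)` for all `n`, then `F = 0`. -/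
theorem stmt4 {𝕜 : Type*} [Field 𝕜] [IsAlgClosed 𝕜] [CharZero 𝕜] {k : ℕ}
    (lam : Fin (k + 1) → 𝕜) (h0 : ∀ i, lam i ≠ 0)
    (hindep : ∀ c : Fin (k + 1) → ℤ, ∏ i, lam i ^ c i = 1 → c = 0)
    (F : MvPolynomial (Fin (k + 2)) 𝕜)
    (hF : ∀ n : ℕ,
      MvPolynomial.eval (Fin.cons ((n : 𝕜) * lam 0 ^ n) (fun i => lam i ^ n)) F = 0) :
    F = 0 :=
  stmt4_general lam h0 hindep F hF
end

section
/- Let 𝕜 be a field of characteristic 0 and let λ ∈ 𝕜 be nonzero. Let J be the m×m Jordan block with eigenvalue λ, where m ≥ 3, acting on 𝕜^m by matrix multiplication. Then the rational function f(x₁, …, x_m) = 2x_{m-2}/x_m − x_{m-1}²/x_m² + x_{m-1}/(λ x_m) is non-constant and satisfies f(J·x) = f(x) as rational functions. -/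
/-! Only the last three coordinates matter. With `(a, b, c) = (x_{m-2}, x_{m-1}, x_m)`, the
Jordan block acts by `(a, b, c) ↦ (λa + b, λb + c, λc)`, and expanding
`f(λa + b, λb + c, λc)` the terms `2b/(λc)` and `1/λ²` produced by the three summands cancel.
Non-constancy: `f` takes the values `0` and `2` at `(0, 0, 1)` and `(1, 0, 1)`. -/

section JordanBlock

variable {𝕜 : Type*} [Field 𝕜] {m : ℕ} {lam : 𝕜} {J : Matrix (Fin m) (Fin m) 𝕜}

theorem jordan_mulVec_apply_of_succ
    (hJ : ∀ i j : Fin m, J i j =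
      if i = j then lam else if (j : ℕ) = (i : ℕ) + 1 then 1 else 0)
    (x : Fin m → 𝕜) {i j : Fin m} (hij : (j : ℕ) = i + 1) :
    J.mulVec x i = lam * x i + x j := by
  have hne : i ≠ j := fun h => by simp [h] at hij
  rw [show J.mulVec x i = ∑ k, J i k * x k from rfl, Fintype.sum_eq_add i j hne]
  · simp [hJ, hne, hij]
  · rintro k ⟨hki, hkj⟩
    have hk : (k : ℕ) ≠ i + 1 := fun h => hkj (Fin.ext (h.trans hij.symm))
    simp [hJ, Ne.symm hki, hk]

theorem jordan_mulVec_apply_last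
    (hJ : ∀ i j : Fin m, J i j =
      if i = j then lam else if (j : ℕ) = (i : ℕ) + 1 then 1 else 0)
    (x : Fin m → 𝕜) {i : Fin m} (hi : (i : ℕ) + 1 = m) :
    J.mulVec x i = lam * x i := by
  rw [show J.mulVec x i = ∑ k, J i k * x k from rfl, Fintype.sum_eq_single i]
  · simp [hJ]
  · intro k hki
    have hk : (k : ℕ) ≠ i + 1 := by omega
    simp [hJ, Ne.symm hki, hk]

end JordanBlock

def jordanInvariant {𝕜 : Type*} [Field 𝕜] (lam a b c : 𝕜) : 𝕜 :=
  2 * a / c - b ^ 2 / c ^ 2 + b / (lam * c)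

theorem jordanInvariant_jordan {𝕜 : Type*} [Field 𝕜] {lam c : 𝕜} (hlam : lam ≠ 0)
    (hc : c ≠ 0) (a b : 𝕜) :
    jordanInvariant lam (lam * a + b) (lam * b + c) (lam * c) = jordanInvariant lam a b c := by
  unfold jordanInvariant
  field_simp
  ring

theorem jordanInvariant_zero_one {𝕜 : Type*} [Field 𝕜] (lam a : 𝕜) :
    jordanInvariant lam a 0 1 = 2 * a := by
  simp [jordanInvariant]

/-- for the `m×m` Jordan block `J` with eigenvalue `λ ≠ 0`, `m ≥ 3`,
the rational function `f(x) = 2x_{m-2}/x_m − x_{m-1}²/x_m² + x_{m-1}/(λ x_m)` is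
non-constant and satisfies `f(J·x) = f(x)` (wherever defined). Coordinates are
0-indexed, so `x_m` is `x ⟨m-1⟩`, etc. -/
theorem stmt6 {𝕜 : Type*} [Field 𝕜] [CharZero 𝕜] {m : ℕ} (hm : 3 ≤ m)
    (lam : 𝕜) (hlam : lam ≠ 0)
    (J : Matrix (Fin m) (Fin m) 𝕜)
    (hJ : ∀ i j : Fin m, J i j =
      if i = j then lam else if (j : ℕ) = (i : ℕ) + 1 then 1 else 0)
    (f : (Fin m → 𝕜) → 𝕜)
    (hf : ∀ x : Fin m → 𝕜, f x =
      2 * x ⟨m - 3, by omega⟩ / x ⟨m - 1, by omega⟩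
        - (x ⟨m - 2, by omega⟩) ^ 2 / (x ⟨m - 1, by omega⟩) ^ 2
        + x ⟨m - 2, by omega⟩ / (lam * x ⟨m - 1, by omega⟩)) :
    (∀ x : Fin m → 𝕜, x ⟨m - 1, by omega⟩ ≠ 0 → f (J.mulVec x) = f x) ∧
    ¬ ∃ a : 𝕜, ∀ x : Fin m → 𝕜, x ⟨m - 1, by omega⟩ ≠ 0 → f x = a := by
  set i₀ : Fin m := ⟨m - 3, by omega⟩
  set i₁ : Fin m := ⟨m - 2, by omega⟩
  set i₂ : Fin m := ⟨m - 1, by omega⟩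
  have hf' : ∀ x, f x = jordanInvariant lam (x i₀) (x i₁) (x i₂) := hf
  refine ⟨fun x hx => ?_, fun ⟨a, ha⟩ => ?_⟩
  · rw [hf', hf', jordan_mulVec_apply_of_succ hJ x (show (i₁ : ℕ) = i₀ + 1 by simp [i₀, i₁]; omega),
      jordan_mulVec_apply_of_succ hJ x (show (i₂ : ℕ) = i₁ + 1 by simp [i₁, i₂]; omega),
      jordan_mulVec_apply_last hJ x (show (i₂ : ℕ) + 1 = m by simp [i₂]; omega),
      jordanInvariant_jordan hlam hx]
  · have h₀₂ : i₀ ≠ i₂ := by simp [i₀, i₂, Fin.ext_iff]; omega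
    have h₁₂ : i₁ ≠ i₂ := by simp [i₁, i₂, Fin.ext_iff]; omega
    have h₀₁ : i₀ ≠ i₁ := by simp [i₀, i₁, Fin.ext_iff]; omega
    have hzero := ha (Pi.single i₂ 1) (by simp [i₂])
    have htwo := ha (Pi.single i₂ 1 + Pi.single i₀ 1) (by simp [i₂, h₀₂.symm])
    rw [hf', Pi.single_eq_of_ne h₀₂, Pi.single_eq_of_ne h₁₂, Pi.single_eq_same,
      jordanInvariant_zero_one] at hzero
    simp only [hf', Pi.add_apply, Pi.single_eq_of_ne h₀₂, Pi.single_eq_of_ne h₁₂,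
      Pi.single_eq_of_ne h₀₁.symm, Pi.single_eq_of_ne h₀₂.symm, Pi.single_eq_same, zero_add, add_zero,
      jordanInvariant_zero_one] at htwo
    rw [← hzero] at htwo
    norm_num at htwo
end

section
/- Let 𝕜 be a field of characteristic 0, let λ₁, λ₂ ∈ 𝕜 be nonzero, and let A be the block-diagonal 4×4 matrix consisting of the two 2×2 Jordan blocks J_{λ₁,2} and J_{λ₂,2}, acting on 𝕜^4 by (x₁,x₂,x₃,x₄) ↦ (λ₁x₁+x₂, λ₁x₂, λ₂x₃+x₄, λ₂x₄). Then the rational function f(x₁,x₂,x₃,x₄) = x₁/(λ₂x₂) − x₃/(λ₁x₄) is non-constant and satisfies f(A·x) = f(x). -/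
/-!
A Jordan block `J_{λ,2}` shifts the ratio `a / b` of its coordinates by `1 / λ`. Hence
`x₁ / (λ₂ x₂)` and `x₃ / (λ₁ x₄)` both increase by `1 / (λ₁ λ₂)` under `A`, and their difference
is invariant. It is not constant since `f (t, 1, 0, 1) = t / λ₂`.
-/

theorem jordan_div_shift {K : Type*} [Field K] {lam b : K} (hlam : lam ≠ 0) (hb : b ≠ 0)
    (a c : K) : (lam * a + b) / (c * (lam * b)) = a / (c * b) + (lam * c)⁻¹ := by
  rcases eq_or_ne c 0 with rfl | hc
  · simp
  · field_simp

theorem stmt7_general {𝕜 : Type*} [Field 𝕜]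
    (lam₁ lam₂ : 𝕜) (h₁ : lam₁ ≠ 0) (h₂ : lam₂ ≠ 0)
    (Φ : (Fin 4 → 𝕜) → (Fin 4 → 𝕜))
    (hΦ : ∀ x : Fin 4 → 𝕜,
      Φ x = ![lam₁ * x 0 + x 1, lam₁ * x 1, lam₂ * x 2 + x 3, lam₂ * x 3])
    (f : (Fin 4 → 𝕜) → 𝕜)
    (hf : ∀ x : Fin 4 → 𝕜, f x = x 0 / (lam₂ * x 1) - x 2 / (lam₁ * x 3)) :
    (∀ x : Fin 4 → 𝕜, x 1 ≠ 0 → x 3 ≠ 0 → f (Φ x) = f x) ∧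
    ¬ ∃ a : 𝕜, ∀ x : Fin 4 → 𝕜, x 1 ≠ 0 → x 3 ≠ 0 → f x = a := by
  constructor
  · intro x hx1 hx3
    simp only [hf, hΦ, Matrix.cons_val_zero, Matrix.cons_val_one, Matrix.head_cons,
      Matrix.cons_val_two, Matrix.tail_cons, Matrix.cons_val_three]
    rw [jordan_div_shift h₁ hx1, jordan_div_shift h₂ hx3, mul_comm lam₂ lam₁]
    ring
  · rintro ⟨a, ha⟩
    have hf_line (t : 𝕜) : f ![t, 1, 0, 1] = t / lam₂ := by simp [hf]
    have ha_zero := ha ![0, 1, 0, 1] one_ne_zero one_ne_zero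
    have ha_lam := ha ![lam₂, 1, 0, 1] one_ne_zero one_ne_zero
    rw [hf_line, zero_div] at ha_zero
    rw [hf_line, div_self h₂, ← ha_zero] at ha_lam
    exact one_ne_zero ha_lam

/-- for `A = J_{λ₁,2} ⊕ J_{λ₂,2}` acting on `𝕜⁴` by
`(x₁,x₂,x₃,x₄) ↦ (λ₁x₁+x₂, λ₁x₂, λ₂x₃+x₄, λ₂x₄)`, the rational function
`f = x₁/(λ₂x₂) − x₃/(λ₁x₄)` is non-constant and `A`-invariant. -/
theorem stmt7 {𝕜 : Type*} [Field 𝕜] [CharZero 𝕜]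
    (lam₁ lam₂ : 𝕜) (h₁ : lam₁ ≠ 0) (h₂ : lam₂ ≠ 0)
    (Φ : (Fin 4 → 𝕜) → (Fin 4 → 𝕜))
    (hΦ : ∀ x : Fin 4 → 𝕜,
      Φ x = ![lam₁ * x 0 + x 1, lam₁ * x 1, lam₂ * x 2 + x 3, lam₂ * x 3])
    (f : (Fin 4 → 𝕜) → 𝕜)
    (hf : ∀ x : Fin 4 → 𝕜, f x = x 0 / (lam₂ * x 1) - x 2 / (lam₁ * x 3)) :
    (∀ x : Fin 4 → 𝕜, x 1 ≠ 0 → x 3 ≠ 0 → f (Φ x) = f x) ∧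
    ¬ ∃ a : 𝕜, ∀ x : Fin 4 → 𝕜, x 1 ≠ 0 → x 3 ≠ 0 → f x = a :=
  stmt7_general lam₁ lam₂ h₁ h₂ Φ hΦ f hf
end

section
/- Let 𝕜 be a field of characteristic 0 and let A be a k×k matrix over 𝕜 which is block diagonal, consisting of one 2×2 Jordan block J_{λ₁,2} and the diagonal matrix diag(λ₂,…,λ_{k-1}), with all λᵢ nonzero. If λ₁, …, λ_{k-1} are multiplicatively dependent via integers c₁,…,c_{k-1} not all zero with ∏ λᵢ^{cᵢ} = 1, then the rational function f(x₁,…,x_k) = x₂^{c₁} · ∏_{i=2}^{k-1} x_{i+1}^{cᵢ} is non-constant and satisfies f(A·x) = f(x). -/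
/-!
Reading `Φ` coordinatewise, the coordinates `x₁, …, x_{k-1}` are simply rescaled by
`λ₁, …, λ_{k-1}` (the shear `x₁ ↦ λ₁x₁ + x₂` only touches `x₁`, which `f` ignores), so
`f (Φ x) = (∏ λᵢ^{cᵢ}) · f x = f x`. If `c_j ≠ 0`, then `f` takes the value `2^{c_j} ≠ 1` at
the point with a single coordinate `2` and all others `1`, and the value `1` at `(1, …, 1)`.
-/

theorem Fintype.prod_mul_zpow_of_prod_zpow_eq_one {ι α : Type*} [Fintype ι]
    [DivisionCommMonoid α] {lam : ι → α} {c : ι → ℤ} (h : ∏ i, lam i ^ c i = 1) (y : ι → α) :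
    ∏ i, (lam i * y i) ^ c i = ∏ i, y i ^ c i := by
  simp_rw [mul_zpow, Finset.prod_mul_distrib, h, one_mul]

theorem Fintype.prod_mulSingle_zpow {ι α : Type*} [Fintype ι] [DecidableEq ι]
    [DivisionCommMonoid α] (j : ι) (a : α) (c : ι → ℤ) :
    ∏ i, Pi.mulSingle j a i ^ c i = a ^ c j :=
  (Fintype.prod_eq_single j fun i hi => by simp [hi]).trans (by simp)

theorem eq_zero_of_two_zpow_eq_one {𝕜 : Type*} [DivisionRing 𝕜] [CharZero 𝕜] {n : ℤ}
    (h : (2 : 𝕜) ^ n = 1) : n = 0 := by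
  have hℚ : (2 : ℚ) ^ n = 1 := Rat.cast_injective (α := 𝕜) (by push_cast; exact h)
  exact (zpow_eq_one_iff_right₀ (by norm_num) (by norm_num)).mp hℚ

/-- here `k = t+2` and `lam : Fin (t+1) → 𝕜` lists `λ₁,…,λ_{k-1}`.
`A = J_{λ₁,2} ⊕ diag(λ₂,…,λ_{k-1})` acts by `(A·x)₀ = λ₁x₀+x₁`, `(A·x)₁ = λ₁x₁`,
`(A·x)ⱼ = λⱼ₋₁ xⱼ` for `j ≥ 2` (0-indexed). If `∏ λᵢ^{cᵢ} = 1` with `c ≠ 0`, then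
`f(x) = ∏_{i} x_{i+1}^{cᵢ}` is non-constant and `A`-invariant. -/
theorem stmt8 {𝕜 : Type*} [Field 𝕜] [CharZero 𝕜] {t : ℕ}
    (lam : Fin (t + 1) → 𝕜)
    (c : Fin (t + 1) → ℤ) (hc : c ≠ 0) (hdep : ∏ i, lam i ^ c i = 1)
    (Φ : (Fin (t + 2) → 𝕜) → (Fin (t + 2) → 𝕜))
    (hΦ : ∀ (x : Fin (t + 2) → 𝕜) (j : Fin (t + 2)),
      Φ x j = if (j : ℕ) = 0 then lam 0 * x 0 + x 1
        else if (j : ℕ) = 1 then lam 0 * x 1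
        else lam ⟨(j : ℕ) - 1, by have := j.isLt; omega⟩ * x j)
    (f : (Fin (t + 2) → 𝕜) → 𝕜)
    (hf : ∀ x : Fin (t + 2) → 𝕜, f x = ∏ i : Fin (t + 1), x i.succ ^ c i) :
    (∀ x : Fin (t + 2) → 𝕜, (∀ i, x i ≠ 0) → f (Φ x) = f x) ∧
    ¬ ∃ a : 𝕜, ∀ x : Fin (t + 2) → 𝕜, (∀ i, x i ≠ 0) → f x = a := by
  have hΦ_succ : ∀ x (i : Fin (t + 1)), Φ x i.succ = lam i * x i.succ := by
    intro x i
    rw [hΦ]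
    rcases Fin.eq_zero_or_eq_succ i with rfl | ⟨i, rfl⟩
    · simp
    · simp [Fin.succ]
  refine ⟨fun x _ => ?_, ?_⟩
  · simp only [hf, hΦ_succ]
    exact Fintype.prod_mul_zpow_of_prod_zpow_eq_one hdep _
  · rintro ⟨a, ha⟩
    obtain ⟨j, hj⟩ := Function.ne_iff.mp hc
    have h_one := ha 1 fun _ => one_ne_zero
    have h_two := ha (Fin.cons 1 (Pi.mulSingle j 2)) fun i => by
      refine Fin.cases one_ne_zero (fun i => ?_) i
      by_cases hi : i = j <;> simp [hi]
    simp only [hf, Fin.cons_succ, Fintype.prod_mulSingle_zpow, Pi.one_apply, one_zpow,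
      Finset.prod_const_one] at h_one h_two
    exact hj (eq_zero_of_two_zpow_eq_one (h_two.trans h_one.symm))
end

section
/- Let 𝕜 be an algebraically closed field of characteristic 0, let Φ : 𝕜^k → 𝕜^k be an invertible linear map given by a matrix A, and suppose that A is diagonalizable with multiplicatively dependent eigenvalues. Then there is no point α ∈ 𝕜^k whose forward orbit under Φ is Zariski dense in 𝔸^k. -/
/-!
In the eigencoordinates `y = P⁻¹ x` the orbit of `α` is `n ↦ λⁿ · β` with `β = P⁻¹ α`.
Splitting the relation `∏ λᵢ ^ cᵢ = 1` as `λ ^ c⁺ = λ ^ c⁻`, the binomial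
`β ^ c⁻ · y ^ c⁺ - β ^ c⁺ · y ^ c⁻` vanishes along this orbit, and it is nonzero when no
coordinate of `β` vanishes; otherwise the orbit lies in a coordinate hyperplane `yᵢ = 0`.
Pulling back along the invertible linear change of variables gives the polynomial in the
original coordinates.
-/

open MvPolynomial

-- No `a ≠ 0` is needed: one of the two exponents is `0`, and `0⁻¹ = 0`.
lemma zpow_eq_pow_toNat_mul_inv_pow_toNat_neg {G₀ : Type*} [GroupWithZero G₀] (a : G₀) (n : ℤ) :
    a ^ n = a ^ n.toNat * (a ^ (-n).toNat)⁻¹ := by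
  obtain ⟨m, rfl | rfl⟩ := Int.eq_nat_or_neg n <;> simp

lemma monomial_sub_monomial_ne_zero {σ R : Type*} [CommRing R] {d e : σ →₀ ℕ} (hde : d ≠ e)
    {a : R} (ha : a ≠ 0) (b : R) : monomial d a - monomial e b ≠ 0 := by
  classical
  intro h
  simpa [coeff_monomial, hde.symm, ha] using congrArg (coeff d) h

section Diagonal

variable {ι : Type*} [Fintype ι]

lemma prod_pow_toNat_eq_prod_pow_toNat_neg {K : Type*} [CommGroupWithZero K] {lam : ι → K}
    {c : ι → ℤ} (h : ∏ i, lam i ^ c i = 1) :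
    ∏ i, lam i ^ (c i).toNat = ∏ i, lam i ^ (-c i).toNat := by
  simp_rw [zpow_eq_pow_toNat_mul_inv_pow_toNat_neg, Finset.prod_mul_distrib,
    Finset.prod_inv_distrib] at h
  refine (mul_inv_eq_one₀ fun h0 => ?_).1 h
  simp [h0] at h

lemma eval_binomial_diagonal_orbit {R : Type*} [CommRing R] (lam β : ι → R) {d e : ι →₀ ℕ}
    (h : ∏ i, lam i ^ d i = ∏ i, lam i ^ e i) (n : ℕ) :
    eval (lam ^ n * β) (monomial d (∏ i, β i ^ e i) - monomial e (∏ i, β i ^ d i)) = 0 := by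
  have eval_orbit (f : ι →₀ ℕ) :
      ∏ i, (lam ^ n * β) i ^ f i = (∏ i, lam i ^ f i) ^ n * ∏ i, β i ^ f i := by
    simp only [Pi.mul_apply, Pi.pow_apply, mul_pow, Finset.prod_mul_distrib, ← Finset.prod_pow,
      pow_right_comm _ n]
  rw [map_sub, eval_monomial, eval_monomial, Finsupp.prod_pow, Finsupp.prod_pow, eval_orbit,
    eval_orbit, h]
  ring

lemma exists_ne_zero_eval_diagonal_orbit_eq_zero {K : Type*} [Field K] (lam β : ι → K)
    {c : ι → ℤ} (hc : c ≠ 0) (hdep : ∏ i, lam i ^ c i = 1) :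
    ∃ G : MvPolynomial ι K, G ≠ 0 ∧ ∀ n : ℕ, eval (lam ^ n * β) G = 0 := by
  by_cases hβ : ∃ i, β i = 0
  · obtain ⟨i, hi⟩ := hβ
    exact ⟨X i, X_ne_zero i, fun n => by simp [hi]⟩
  push Not at hβ
  let d : ι →₀ ℕ := Finsupp.equivFunOnFinite.symm fun i => (c i).toNat
  let e : ι →₀ ℕ := Finsupp.equivFunOnFinite.symm fun i => (-c i).toNat
  have hde : d ≠ e := by
    obtain ⟨i, hi⟩ := Function.ne_iff.1 hc
    intro h
    have := DFunLike.congr_fun h i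
    simp only [d, e, Finsupp.coe_equivFunOnFinite_symm, Pi.zero_apply] at this hi
    omega
  have hβe : ∏ i, β i ^ e i ≠ 0 := Finset.prod_ne_zero_iff.2 fun i _ => pow_ne_zero _ (hβ i)
  exact ⟨_, monomial_sub_monomial_ne_zero hde hβe _,
    eval_binomial_diagonal_orbit lam β (prod_pow_toNat_eq_prod_pow_toNat_neg hdep)⟩

end Diagonal

namespace Matrix

variable {ι R : Type*} [Fintype ι]

section CommSemiring

variable [CommSemiring R]

noncomputable def linearSubst (M : Matrix ι ι R) : MvPolynomial ι R →ₐ[R] MvPolynomial ι R :=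
  bind₁ fun i => ∑ j, C (M i j) * X j

lemma eval_linearSubst (M : Matrix ι ι R) (x : ι → R) (F : MvPolynomial ι R) :
    eval x (linearSubst M F) = eval (M *ᵥ x) F := by
  rw [linearSubst, eval, eval₂Hom_bind₁]
  refine congrArg (eval · F) (funext fun i => ?_)
  simp [mulVec, dotProduct]

lemma linearSubst_linearSubst (M N : Matrix ι ι R) (F : MvPolynomial ι R) :
    linearSubst M (linearSubst N F) = linearSubst (N * M) F := by
  rw [linearSubst, linearSubst, linearSubst, bind₁_bind₁]
  refine congrArg (bind₁ · F) (funext fun i => ?_)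
  simp only [map_sum, map_mul, bind₁_C_right, bind₁_X_right, mul_apply, Finset.mul_sum,
    Finset.sum_mul, ← mul_assoc]
  rw [Finset.sum_comm]

lemma linearSubst_one [DecidableEq ι] : linearSubst (1 : Matrix ι ι R) = AlgHom.id R _ := by
  simp [linearSubst, one_apply]

end CommSemiring

variable [DecidableEq ι] [CommRing R]

lemma linearSubst_injective {M : Matrix ι ι R} (hM : IsUnit M.det) :
    Function.Injective (linearSubst M) := by
  refine Function.LeftInverse.injective (g := linearSubst M⁻¹) fun F => ?_
  rw [linearSubst_linearSubst, mul_nonsing_inv M hM, linearSubst_one, AlgHom.id_apply]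

lemma inv_mulVec_pow_mulVec {A P : Matrix ι ι R} {lam : ι → R} (hP : IsUnit P.det)
    (hA : A = P * diagonal lam * P⁻¹) (n : ℕ) (α : ι → R) :
    P⁻¹ *ᵥ (A ^ n *ᵥ α) = lam ^ n * (P⁻¹ *ᵥ α) := by
  have hconj : SemiconjBy P⁻¹ A (diagonal lam) := by
    rw [SemiconjBy, hA, ← mul_assoc, ← mul_assoc, nonsing_inv_mul P hP, one_mul]
  funext i
  rw [mulVec_mulVec, (hconj.pow_right n).eq, diagonal_pow, ← mulVec_mulVec, mulVec_diagonal]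
  rfl

end Matrix

theorem stmt13_general {𝕜 : Type*} [Field 𝕜] {k : ℕ}
    (A P : Matrix (Fin k) (Fin k) 𝕜) (lam : Fin k → 𝕜)
    (hP : IsUnit P.det) (hdiag : A = P * Matrix.diagonal lam * P⁻¹)
    (c : Fin k → ℤ) (hc : c ≠ 0) (hdep : ∏ i, lam i ^ c i = 1) :
    ∀ α : Fin k → 𝕜, ∃ F : MvPolynomial (Fin k) 𝕜, F ≠ 0 ∧
      ∀ n : ℕ, MvPolynomial.eval ((A ^ n).mulVec α) F = 0 := by
  intro α
  obtain ⟨G, hG, hGorbit⟩ :=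
    exists_ne_zero_eval_diagonal_orbit_eq_zero lam (P⁻¹.mulVec α) hc hdep
  refine ⟨P⁻¹.linearSubst G, ?_, fun n => ?_⟩
  · exact (map_ne_zero_iff _ (Matrix.linearSubst_injective (P.isUnit_nonsing_inv_det hP))).2 hG
  · rw [Matrix.eval_linearSubst, Matrix.inv_mulVec_pow_mulVec hP hdiag, hGorbit]

/-- if `A` is invertible and diagonalizable (`A = P·diag(λ)·P⁻¹`)
with multiplicatively dependent eigenvalues, then no point has Zariski dense orbit
under `x ↦ A·x`: every orbit lies in the zero set of some nonzero polynomial. -/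
theorem stmt13 {𝕜 : Type*} [Field 𝕜] [IsAlgClosed 𝕜] [CharZero 𝕜] {k : ℕ}
    (A P : Matrix (Fin k) (Fin k) 𝕜) (lam : Fin k → 𝕜)
    (hP : IsUnit P.det) (hdiag : A = P * Matrix.diagonal lam * P⁻¹)
    (hA : A.det ≠ 0)
    (c : Fin k → ℤ) (hc : c ≠ 0) (hdep : ∏ i, lam i ^ c i = 1) :
    ∀ α : Fin k → 𝕜, ∃ F : MvPolynomial (Fin k) 𝕜, F ≠ 0 ∧
      ∀ n : ℕ, MvPolynomial.eval ((A ^ n).mulVec α) F = 0 :=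
  stmt13_general A P lam hP hdiag c hc hdep
end
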